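/- Let d ≥ 1 and let s ≥ s₀ > d/2 be real numbers. There exists a constant C ≥ 1, depending only on d, s and s₀, such that for every integer m ≥ 3, every real N ≥ 1, and every function f : ℤ^d → [0,∞) with f(a) = 0 whenever ⟨a⟩ > N and ‖f‖_s < ∞, one has (Σ_{ℓ∈ℤ^d, ⟨ℓ⟩>N} ⟨ℓ⟩^{2s₀} (f^{⋆(m−1)}(ℓ))²)^{1/2} ≤ C^{m} N^{s₀−s} ‖f‖_s^{m−1}. (High-frequency output of a purely low-frequency convolution gains a factor N^{s₀−s}, because the zero-momentum condition forces one large low mode.) -/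

import Mathlib

/-- Japanese bracket `⟨a⟩ = (1+|a|²)^{1/2}` for `a ∈ ℤ^d`. -/
noncomputable def jap {d : ℕ} (a : Fin d → ℤ) : ℝ :=
  Real.sqrt (1 + ∑ i, ((a i : ℝ)) ^ 2)

/-- Convolution of two functions on `ℤ^d`. -/
noncomputable def conv {d : ℕ} (f g : (Fin d → ℤ) → ℝ) : (Fin d → ℤ) → ℝ :=
  fun a => ∑' b : Fin d → ℤ, f b * g (a - b)

/-- Iterated convolution `f^{⋆k}`, with `f^{⋆0}` the indicator of `{0}`. -/
noncomputable def convIter {d : ℕ} (f : (Fin d → ℤ) → ℝ) : ℕ → (Fin d → ℤ) → ℝ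
  | 0 => fun a => if a = 0 then 1 else 0
  | k + 1 => conv (convIter f k) f

/-- Weighted `ℓ²_s` norm of a real-valued sequence on `ℤ^d`. -/
noncomputable def wnormR {d : ℕ} (s : ℝ) (f : (Fin d → ℤ) → ℝ) : ℝ :=
  Real.sqrt (∑' a : Fin d → ℤ, jap a ^ (2 * s) * (f a) ^ 2)


/-!
If `⟨ℓ⟩ > N` and `ℓ = a₁ + ⋯ + a_{m-1}` with all `⟨aⱼ⟩ ≤ N`, then the triangle inequality for
`⟨·⟩` forces some `⟨aⱼ⟩ > N / (m - 1)`. Hence on `⟨ℓ⟩ > N` the power `f^{⋆(m-1)}` is at most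
`(m - 1) · f^{⋆(m-2)} ⋆ f_high`, where `f_high` is `f` restricted to `⟨a⟩ > N / (m - 1)`.
Young's inequality bounds the `ℓ²` norm of this by `‖f‖₁^{m-2} ‖f_high‖₂`, Cauchy–Schwarz gives
`‖f‖₁ ≤ (∑ ⟨a⟩^{-2s₀})^{1/2} ‖f‖_s` (finite because `2s₀ > d`), and
`‖f_high‖₂ ≤ (N / (m - 1))^{-s} ‖f‖_s`. The weight `⟨ℓ⟩^{s₀}` costs at most `(mN)^{s₀}`, since
`f^{⋆(m-1)}` is supported in `⟨ℓ⟩ ≤ mN`.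
-/
open Finset

lemma rpow_sq_eq_rpow_two_mul {x : ℝ} (hx : 0 ≤ x) (r : ℝ) : (x ^ r) ^ 2 = x ^ (2 * r) := by
  rw [← Real.rpow_mul_natCast hx, mul_comm]
  norm_num

section Bracket

variable {d : ℕ}

lemma one_le_jap (a : Fin d → ℤ) : 1 ≤ jap a :=
  Real.one_le_sqrt.mpr (le_add_of_nonneg_right (by positivity))

lemma jap_pos (a : Fin d → ℤ) : 0 < jap a :=
  one_pos.trans_le (one_le_jap a)

lemma sq_jap (a : Fin d → ℤ) : jap a ^ 2 = 1 + ∑ i, (a i : ℝ) ^ 2 :=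
  Real.sq_sqrt (by positivity)

@[simp]
lemma jap_zero : jap (0 : Fin d → ℤ) = 1 := by
  simp [jap]

lemma jap_add_le (a b : Fin d → ℤ) : jap (a + b) ≤ jap a + jap b := by
  have hnorm (c : Fin d → ℤ) : √(∑ i, (c i : ℝ) ^ 2) ≤ jap c :=
    Real.sqrt_le_sqrt (le_add_of_nonneg_left zero_le_one)
  have hcs : ∑ i, (a i : ℝ) * b i ≤ jap a * jap b :=
    (Real.sum_mul_le_sqrt_mul_sqrt _ _ _).trans
      (mul_le_mul (hnorm a) (hnorm b) (Real.sqrt_nonneg _) (jap_pos a).le)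
  have hexpand : ∑ i, ((a + b) i : ℝ) ^ 2
      = ∑ i, (a i : ℝ) ^ 2 + 2 * ∑ i, (a i : ℝ) * b i + ∑ i, (b i : ℝ) ^ 2 := by
    simp only [Pi.add_apply, Int.cast_add, add_sq, sum_add_distrib, mul_sum, mul_assoc]
  rw [jap, Real.sqrt_le_left (add_pos (jap_pos a) (jap_pos b)).le, hexpand]
  nlinarith [sq_jap a, sq_jap b]

lemma abs_apply_le_jap (a : Fin d → ℤ) (i : Fin d) : |(a i : ℝ)| ≤ jap a :=
  Real.abs_le_sqrt <| le_add_of_nonneg_of_le zero_le_one <|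
    single_le_sum (f := fun j => (a j : ℝ) ^ 2) (fun _ _ => sq_nonneg _) (mem_univ i)

lemma finite_setOf_jap_le (R : ℝ) : {a : Fin d → ℤ | jap a ≤ R}.Finite := by
  refine (Set.finite_Icc (-fun _ => ⌈R⌉) (fun _ => ⌈R⌉)).subset fun a ha => ?_
  have h (i : Fin d) : |a i| ≤ ⌈R⌉ := by
    exact_mod_cast ((abs_apply_le_jap a i).trans ha).trans (Int.le_ceil R)
  exact ⟨fun i => by simpa using (abs_le.mp (h i)).1, fun i => (abs_le.mp (h i)).2⟩

end Bracket

noncomputable def latticeBall (d : ℕ) (R : ℝ) : Finset (Fin d → ℤ) :=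
  (finite_setOf_jap_le R).toFinset

@[simp]
lemma mem_latticeBall {d : ℕ} {R : ℝ} {a : Fin d → ℤ} : a ∈ latticeBall d R ↔ jap a ≤ R :=
  Set.Finite.mem_toFinset _

def SupportedIn {d : ℕ} (f : (Fin d → ℤ) → ℝ) (R : ℝ) : Prop :=
  ∀ a, R < jap a → f a = 0

namespace SupportedIn

variable {d : ℕ} {f : (Fin d → ℤ) → ℝ} {R : ℝ}

lemma eq_zero_of_notMem (hf : SupportedIn f R) {a : Fin d → ℤ} (ha : a ∉ latticeBall d R) :
    f a = 0 :=
  hf a (by simpa using ha)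

lemma summable (hf : SupportedIn f R) : Summable f :=
  summable_of_ne_finset_zero fun _ => hf.eq_zero_of_notMem

lemma tsum_eq_sum (hf : SupportedIn f R) : ∑' a, f a = ∑ a ∈ latticeBall d R, f a :=
  _root_.tsum_eq_sum fun _ => hf.eq_zero_of_notMem

lemma summable_mul (hf : SupportedIn f R) (g : (Fin d → ℤ) → ℝ) :
    Summable fun a => f a * g a :=
  SupportedIn.summable (R := R) fun a ha => by rw [hf a ha, zero_mul]

lemma sq (hf : SupportedIn f R) : SupportedIn (fun a => f a ^ 2) R :=
  fun a ha => by simp [hf a ha]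

end SupportedIn

section Translation

variable {G E : Type*} [AddGroup G] [AddCommMonoid E] [TopologicalSpace E]

lemma Summable.comp_sub_right {g : G → E} (hg : Summable g) (b : G) :
    Summable fun a => g (a - b) :=
  (Equiv.subRight b).summable_iff.mpr hg

lemma tsum_comp_sub_right (g : G → E) (b : G) : ∑' a, g (a - b) = ∑' a, g a :=
  (Equiv.subRight b).tsum_eq g

end Translation

section Convolution

variable {d : ℕ} {f g h : (Fin d → ℤ) → ℝ} {R R' : ℝ}

lemma conv_comm (f g : (Fin d → ℤ) → ℝ) : conv f g = conv g f := by
  funext a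
  rw [conv, conv, ← (Equiv.subLeft a).tsum_eq]
  simp [mul_comm]

lemma conv_nonneg (hf : ∀ a, 0 ≤ f a) (hg : ∀ a, 0 ≤ g a) (a : Fin d → ℤ) :
    0 ≤ conv f g a :=
  tsum_nonneg fun b => mul_nonneg (hf b) (hg _)

lemma supportedIn_conv (hf : SupportedIn f R) (hg : SupportedIn g R') :
    SupportedIn (conv f g) (R + R') := by
  intro a ha
  have hterm (b : Fin d → ℤ) : f b * g (a - b) = 0 := by
    rcases lt_or_ge R (jap b) with hb | hb
    · rw [hf b hb, zero_mul]
    · have := jap_add_le b (a - b)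
      rw [add_sub_cancel] at this
      rw [hg (a - b) (by linarith), mul_zero]
  simp [conv, hterm]

namespace SupportedIn

lemma conv_eq_sum (hf : SupportedIn f R) (g : (Fin d → ℤ) → ℝ) (a : Fin d → ℤ) :
    conv f g a = ∑ b ∈ latticeBall d R, f b * g (a - b) :=
  _root_.tsum_eq_sum fun b hb => by rw [hf.eq_zero_of_notMem hb, zero_mul]

lemma tsum_conv (hf : SupportedIn f R) (hg : Summable g) :
    ∑' a, conv f g a = (∑' a, f a) * ∑' a, g a := by
  simp_rw [hf.conv_eq_sum, hf.tsum_eq_sum, sum_mul]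
  rw [Summable.tsum_finsetSum fun b _ => (hg.comp_sub_right b).mul_left (f b)]
  simp_rw [tsum_mul_left, tsum_comp_sub_right]

lemma conv_assoc (hf : SupportedIn f R) (hg : SupportedIn g R') (h : (Fin d → ℤ) → ℝ) :
    conv (conv f g) h = conv f (conv g h) := by
  funext a
  have hinner (b : Fin d → ℤ) : ∑' c, g (c - b) * h (a - c) = conv g h (a - b) := by
    rw [conv, ← (Equiv.addRight b).tsum_eq]
    simp only [Equiv.coe_addRight, add_sub_cancel_right, sub_add_eq_sub_sub_swap]
  have hsumm (b : Fin d → ℤ) : Summable fun c => f b * (g (c - b) * h (a - c)) := by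
    refine ((hg.summable_mul fun e => h (a - b - e)).comp_sub_right b).mul_left (f b) |>.congr
      fun c => ?_
    simp [sub_sub_sub_cancel_right]
  calc conv (conv f g) h a = ∑' c, ∑ b ∈ latticeBall d R, f b * (g (c - b) * h (a - c)) := by
        refine tsum_congr fun c => ?_
        rw [hf.conv_eq_sum, sum_mul]
        simp only [mul_assoc]
    _ = ∑ b ∈ latticeBall d R, f b * conv g h (a - b) := by
        rw [Summable.tsum_finsetSum fun b _ => hsumm b]
        simp_rw [tsum_mul_left, hinner]
    _ = conv f (conv g h) a := (hf.conv_eq_sum _ a).symm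

lemma conv_right_comm {R'' : ℝ} (hf : SupportedIn f R) (hg : SupportedIn g R')
    (hh : SupportedIn h R'') : conv (conv f g) h = conv (conv f h) g := by
  rw [hf.conv_assoc hg, hf.conv_assoc hh, conv_comm g]

lemma sq_conv_le (hg0 : ∀ a, 0 ≤ g a) (hg : SupportedIn g R) (h : (Fin d → ℤ) → ℝ)
    (a : Fin d → ℤ) : conv g h a ^ 2 ≤ (∑' b, g b) * conv g (fun b => h b ^ 2) a := by
  rw [hg.conv_eq_sum, hg.conv_eq_sum, hg.tsum_eq_sum]
  exact sum_sq_le_sum_mul_sum_of_sq_le_mul _ (fun b _ => hg0 b)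
    (fun b _ => mul_nonneg (hg0 b) (sq_nonneg _)) fun b _ => le_of_eq (by ring)

lemma tsum_sq_conv_le (hg0 : ∀ a, 0 ≤ g a) (hg : SupportedIn g R) (hh : SupportedIn h R') :
    ∑' a, conv g h a ^ 2 ≤ (∑' a, g a) ^ 2 * ∑' a, h a ^ 2 := by
  calc ∑' a, conv g h a ^ 2 ≤ ∑' a, (∑' b, g b) * conv g (fun b => h b ^ 2) a :=
        Summable.tsum_le_tsum (hg.sq_conv_le hg0 h) (supportedIn_conv hg hh).sq.summable
          ((supportedIn_conv hg hh.sq).summable.mul_left _)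
    _ = (∑' a, g a) ^ 2 * ∑' a, h a ^ 2 := by
        rw [tsum_mul_left, hg.tsum_conv hh.sq.summable]; ring

end SupportedIn

end Convolution

section Iterated

variable {d : ℕ} {f : (Fin d → ℤ) → ℝ} {N : ℝ}

lemma conv_convIter_zero (f g : (Fin d → ℤ) → ℝ) : conv (convIter f 0) g = g := by
  funext a
  rw [conv, tsum_eq_single 0 fun b hb => by simp [convIter, hb]]
  simp [convIter]

lemma convIter_nonneg (hf : ∀ a, 0 ≤ f a) (k : ℕ) (a : Fin d → ℤ) : 0 ≤ convIter f k a := by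
  induction k generalizing a with
  | zero => unfold convIter; positivity
  | succ k ih => exact conv_nonneg ih hf a

lemma supportedIn_convIter (hf : SupportedIn f N) (k : ℕ) :
    SupportedIn (convIter f k) (1 + k * N) := by
  induction k with
  | zero =>
    intro a ha
    have : a ≠ 0 := by rintro rfl; simp at ha
    simp [convIter, this]
  | succ k ih => simpa [convIter, add_mul, add_assoc] using supportedIn_conv ih hf

lemma tsum_convIter (hf : SupportedIn f N) (k : ℕ) :
    ∑' a, convIter f k a = (∑' a, f a) ^ k := by
  induction k with
  | zero => simp [convIter]
  | succ k ih => rw [convIter, (supportedIn_convIter hf k).tsum_conv hf.summable, ih, pow_succ]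

end Iterated

noncomputable def highPart {d : ℕ} (M : ℝ) (f : (Fin d → ℤ) → ℝ) : (Fin d → ℤ) → ℝ :=
  fun a => if M < jap a then f a else 0

section HighPart

variable {d : ℕ} {f : (Fin d → ℤ) → ℝ} {M N : ℝ}

lemma highPart_nonneg (hf : ∀ a, 0 ≤ f a) (a : Fin d → ℤ) : 0 ≤ highPart M f a := by
  unfold highPart; split_ifs <;> simp [hf a]

lemma supportedIn_highPart (hf : SupportedIn f N) : SupportedIn (highPart M f) N :=
  fun a ha => by simp [highPart, hf a ha]

lemma convIter_succ_le_mul_conv_highPart (hf0 : ∀ a, 0 ≤ f a) (hf : SupportedIn f N)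
    (M : ℝ) (k : ℕ) {ℓ : Fin d → ℤ} (hℓ : (k + 1) * M < jap ℓ) :
    convIter f (k + 1) ℓ ≤ (k + 1) * conv (convIter f k) (highPart M f) ℓ := by
  induction k generalizing ℓ with
  | zero =>
    simp only [CharP.cast_eq_zero, zero_add, one_mul] at hℓ ⊢
    show conv (convIter f 0) f ℓ ≤ conv (convIter f 0) (highPart M f) ℓ
    rw [conv_convIter_zero, conv_convIter_zero, highPart, if_pos hℓ]
  | succ k ih =>
    set g := convIter f (k + 1)
    set h := highPart M f
    -- If the last factor `ℓ - b` is low, then `⟨b⟩ > (k + 1) M` and the induction hypothesis applies.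
    have hterm (b : Fin d → ℤ) :
        g b * f (ℓ - b) ≤ g b * h (ℓ - b) + (k + 1) * (conv (convIter f k) h b * f (ℓ - b)) := by
      have hlow_nonneg : 0 ≤ (k + 1) * (conv (convIter f k) h b * f (ℓ - b)) :=
        mul_nonneg (by positivity)
          (mul_nonneg (conv_nonneg (convIter_nonneg hf0 k) (highPart_nonneg hf0) b) (hf0 _))
      by_cases hb : M < jap (ℓ - b)
      · simp only [h, highPart, if_pos hb]
        exact le_add_of_nonneg_right hlow_nonneg
      · have hjb : (k + 1) * M < jap b := by
          have := jap_add_le b (ℓ - b)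
          rw [add_sub_cancel] at this
          push_cast at hℓ
          linarith
        calc g b * f (ℓ - b) ≤ (k + 1) * conv (convIter f k) h b * f (ℓ - b) :=
              mul_le_mul_of_nonneg_right (ih hjb) (hf0 _)
          _ ≤ _ := by
              rw [mul_assoc]
              exact le_add_of_nonneg_left (mul_nonneg (convIter_nonneg hf0 _ b)
                (highPart_nonneg hf0 _))
    have hg := supportedIn_convIter hf (k + 1)
    have hh : SupportedIn h N := supportedIn_highPart hf
    have hlow := supportedIn_conv (supportedIn_convIter hf k) hh
    calc convIter f (k + 2) ℓ = ∑' b, g b * f (ℓ - b) := rfl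
      _ ≤ ∑' b, (g b * h (ℓ - b) + (k + 1) * (conv (convIter f k) h b * f (ℓ - b))) :=
          Summable.tsum_le_tsum hterm (hg.summable_mul _)
            ((hg.summable_mul _).add ((hlow.summable_mul _).mul_left _))
      _ = conv g h ℓ + (k + 1) * conv (conv (convIter f k) h) f ℓ := by
          rw [Summable.tsum_add (hg.summable_mul _) ((hlow.summable_mul _).mul_left _),
            tsum_mul_left]
          rfl
      _ = (↑(k + 1) + 1) * conv g h ℓ := by
          rw [(supportedIn_convIter hf k).conv_right_comm hh hf,
            show conv (convIter f k) f = g from rfl]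
          push_cast
          ring

end HighPart

section Weighted

variable {d : ℕ} {f : (Fin d → ℤ) → ℝ} {s : ℝ}

lemma sq_wnormR (s : ℝ) (f : (Fin d → ℤ) → ℝ) :
    wnormR s f ^ 2 = ∑' a, jap a ^ (2 * s) * f a ^ 2 :=
  Real.sq_sqrt (tsum_nonneg fun a => mul_nonneg (Real.rpow_nonneg (jap_pos a).le _) (sq_nonneg _))

lemma tsum_sq_highPart_le {M : ℝ} (hM : 0 < M) (hs : 0 ≤ s)
    (hfs : Summable fun a => jap a ^ (2 * s) * f a ^ 2) :
    ∑' a, highPart M f a ^ 2 ≤ M ^ (-(2 * s)) * wnormR s f ^ 2 := by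
  have hle (a : Fin d → ℤ) : highPart M f a ^ 2 ≤ M ^ (-(2 * s)) * (jap a ^ (2 * s) * f a ^ 2) := by
    unfold highPart
    split_ifs with ha
    · rw [Real.rpow_neg hM.le, ← mul_assoc]
      have : M ^ (2 * s) ≤ jap a ^ (2 * s) := by gcongr
      calc f a ^ 2 = (M ^ (2 * s))⁻¹ * M ^ (2 * s) * f a ^ 2 := by
            rw [inv_mul_cancel₀ (by positivity), one_mul]
        _ ≤ (M ^ (2 * s))⁻¹ * jap a ^ (2 * s) * f a ^ 2 := by gcongr
    · simpa using mul_nonneg (Real.rpow_nonneg hM.le _)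
        (mul_nonneg (Real.rpow_nonneg (jap_pos a).le _) (sq_nonneg (f a)))
  rw [sq_wnormR, ← tsum_mul_left]
  exact Summable.tsum_le_tsum hle
    (Summable.of_nonneg_of_le (fun _ => sq_nonneg _) hle (hfs.mul_left _)) (hfs.mul_left _)

lemma tsum_le_sqrt_mul_wnormR {N s₀ : ℝ} (hf : SupportedIn f N) (hs₀s : s₀ ≤ s)
    (hsum : Summable fun a : Fin d → ℤ => jap a ^ (-(2 * s₀)))
    (hfs : Summable fun a => jap a ^ (2 * s) * f a ^ 2) :
    ∑' a, f a ≤ √(∑' a : Fin d → ℤ, jap a ^ (-(2 * s₀))) * wnormR s f := by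
  rw [hf.tsum_eq_sum, wnormR]
  calc ∑ a ∈ latticeBall d N, f a
      = ∑ a ∈ latticeBall d N, jap a ^ (-s) * (jap a ^ s * f a) := by
        refine sum_congr rfl fun a _ => ?_
        rw [← mul_assoc, ← Real.rpow_add (jap_pos a), neg_add_cancel, Real.rpow_zero, one_mul]
    _ ≤ √(∑ a ∈ latticeBall d N, (jap a ^ (-s)) ^ 2) *
          √(∑ a ∈ latticeBall d N, (jap a ^ s * f a) ^ 2) :=
        Real.sum_mul_le_sqrt_mul_sqrt _ _ _
    _ ≤ √(∑' a : Fin d → ℤ, jap a ^ (-(2 * s₀))) * √(∑' a, jap a ^ (2 * s) * f a ^ 2) := by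
        gcongr
        · refine (sum_le_sum fun a _ => ?_).trans
            (hsum.sum_le_tsum _ fun a _ => Real.rpow_nonneg (jap_pos a).le _)
          rw [rpow_sq_eq_rpow_two_mul (jap_pos a).le]
          exact Real.rpow_le_rpow_of_exponent_le (one_le_jap a) (by linarith)
        · refine (sum_le_sum fun a _ => ?_).trans (hfs.sum_le_tsum _ fun a _ =>
            mul_nonneg (Real.rpow_nonneg (jap_pos a).le _) (sq_nonneg _))
          rw [mul_pow, rpow_sq_eq_rpow_two_mul (jap_pos a).le]

end Weighted

section LatticeSums

lemma summable_prod_apply {ι α : Type*} [Fintype ι] [DecidableEq ι] [DecidableEq α]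
    {v : α → ℝ} (hv0 : ∀ x, 0 ≤ v x) (hv : Summable v) :
    Summable fun a : ι → α => ∏ i, v (a i) := by
  refine summable_of_sum_le (c := (∑' x, v x) ^ Fintype.card ι)
    (fun a => prod_nonneg fun i _ => hv0 _) fun s => ?_
  calc ∑ a ∈ s, ∏ i, v (a i)
      ≤ ∑ a ∈ Fintype.piFinset fun i => s.image (· i), ∏ i, v (a i) :=
        sum_le_sum_of_subset_of_nonneg
          (fun a ha => Fintype.mem_piFinset.mpr fun i => mem_image_of_mem _ ha)
          fun a _ _ => prod_nonneg fun i _ => hv0 _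
    _ = ∏ i, ∑ x ∈ s.image (· i), v x := (prod_univ_sum _ _).symm
    _ ≤ ∏ _i : ι, ∑' x, v x :=
        prod_le_prod (fun i _ => sum_nonneg fun x _ => hv0 x)
          fun i _ => hv.sum_le_tsum _ fun x _ => hv0 x
    _ = (∑' x, v x) ^ Fintype.card ι := by rw [prod_const, card_univ]

lemma summable_one_add_sq_rpow_neg {r : ℝ} (hr : 1 / 2 < r) :
    Summable fun n : ℤ => (1 + (n : ℝ) ^ 2) ^ (-r) := by
  refine Summable.of_norm_bounded_eventually (Real.summable_abs_int_rpow (b := 2 * r) (by linarith))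
    ((Filter.eventually_cofinite_ne 0).mono fun n hn => ?_)
  have hn' : 0 < |(n : ℝ)| := by simpa using hn
  rw [Real.norm_of_nonneg (by positivity), ← sq_abs, neg_mul_eq_mul_neg,
    Real.rpow_mul hn'.le, ← Real.rpow_natCast]
  push_cast
  exact Real.rpow_le_rpow_of_nonpos (by positivity) (by linarith) (by linarith)

lemma summable_jap_rpow_neg {d : ℕ} {t : ℝ} (ht : (d : ℝ) / 2 < t) :
    Summable fun a : Fin d → ℤ => jap a ^ (-(2 * t)) := by
  rcases Nat.eq_zero_or_pos d with rfl | hd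
  · exact Summable.of_finite
  have hd' : (0 : ℝ) < d := Nat.cast_pos.mpr hd
  have htd : 0 < t / d := div_pos (by linarith [div_pos hd' two_pos]) hd'
  refine Summable.of_nonneg_of_le (fun a => Real.rpow_nonneg (jap_pos a).le _) (fun a => ?_)
    (summable_prod_apply (fun n => Real.rpow_nonneg (by positivity) _)
      (summable_one_add_sq_rpow_neg (r := t / d) (by rw [lt_div_iff₀ hd']; linarith)))
  -- `∏ᵢ (1 + aᵢ²) ≤ ⟨a⟩^{2d}` reduces the sum to a product of one-dimensional sums.
  have hprod : ∏ i, (1 + (a i : ℝ) ^ 2) ≤ jap a ^ (2 * d) := by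
    calc ∏ i, (1 + (a i : ℝ) ^ 2) ≤ ∏ _i : Fin d, jap a ^ 2 :=
          prod_le_prod (fun i _ => by positivity) fun i _ => by
            rw [sq_jap]
            gcongr
            exact single_le_sum (f := fun j => (a j : ℝ) ^ 2) (fun _ _ => sq_nonneg _) (mem_univ i)
      _ = jap a ^ (2 * d) := by simp [pow_mul]
  calc jap a ^ (-(2 * t)) = (jap a ^ (2 * d)) ^ (-(t / d)) := by
        rw [← Real.rpow_natCast, ← Real.rpow_mul (jap_pos a).le]
        congr 1
        push_cast
        field_simp
    _ ≤ (∏ i, (1 + (a i : ℝ) ^ 2)) ^ (-(t / d)) :=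
        Real.rpow_le_rpow_of_nonpos (prod_pos fun i _ => by positivity) hprod
          (neg_nonpos.mpr htd.le)
    _ = ∏ i, (1 + (a i : ℝ) ^ 2) ^ (-(t / d)) :=
        (Real.finsetProd_rpow _ _ (fun i _ => by positivity) _).symm

end LatticeSums

lemma natCast_rpow_le_two_rpow_pow (n : ℕ) {r : ℝ} (hr : 0 ≤ r) : (n : ℝ) ^ r ≤ (2 ^ r) ^ n := by
  rw [Real.rpow_pow_comm zero_le_two]
  gcongr
  exact_mod_cast n.lt_two_pow_self.le

lemma high_frequency_factor_le (k : ℕ) {N s s₀ : ℝ} (hN : 0 < N) (hs₀ : 0 ≤ s₀) (hs : 0 ≤ s) :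
    ((k + 2) * N) ^ s₀ * (k + 1) * (N / (k + 1)) ^ (-s) ≤
      (2 ^ (s₀ + 1 + s)) ^ (k + 2) * N ^ (s₀ - s) := by
  have hk1 : (0 : ℝ) < k + 1 := by positivity
  have hk12 : (k + 1 : ℝ) ≤ k + 2 := by linarith
  calc ((k + 2) * N) ^ s₀ * (k + 1) * (N / (k + 1)) ^ (-s)
      = (k + 2) ^ s₀ * (k + 1) ^ (1 + s) * N ^ (s₀ - s) := by
        rw [Real.mul_rpow (by positivity) hN.le, Real.div_rpow hN.le hk1.le, Real.rpow_neg hN.le,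
          Real.rpow_neg hk1.le, Real.rpow_add hk1, Real.rpow_one, Real.rpow_sub hN]
        field_simp
    _ ≤ (k + 2) ^ s₀ * (k + 2) ^ (1 + s) * N ^ (s₀ - s) := by gcongr
    _ = ((k + 2 : ℕ) : ℝ) ^ (s₀ + 1 + s) * N ^ (s₀ - s) := by
        rw [← Real.rpow_add (by positivity), ← add_assoc]
        push_cast
        rfl
    _ ≤ (2 ^ (s₀ + 1 + s)) ^ (k + 2) * N ^ (s₀ - s) := by
        gcongr
        exact natCast_rpow_le_two_rpow_pow _ (by positivity)

noncomputable def highSummand {d : ℕ} (s₀ N : ℝ) (g : (Fin d → ℤ) → ℝ) (ℓ : Fin d → ℤ) : ℝ :=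
  if N < jap ℓ then jap ℓ ^ (2 * s₀) * g ℓ ^ 2 else 0

section HighOutput

variable {d : ℕ} {f : (Fin d → ℤ) → ℝ} {N s s₀ : ℝ}

lemma highSummand_nonneg (s₀ N : ℝ) (g : (Fin d → ℤ) → ℝ) (ℓ : Fin d → ℤ) :
    0 ≤ highSummand s₀ N g ℓ := by
  unfold highSummand
  split_ifs
  exacts [mul_nonneg (Real.rpow_nonneg (jap_pos ℓ).le _) (sq_nonneg _), le_rfl]

lemma highSummand_convIter_le (hN : 1 ≤ N) (hs₀ : 0 ≤ s₀) (hf0 : ∀ a, 0 ≤ f a)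
    (hf : SupportedIn f N) (k : ℕ) (ℓ : Fin d → ℤ) :
    highSummand s₀ N (convIter f (k + 1)) ℓ ≤
      ((k + 2) * N) ^ (2 * s₀) * (k + 1) ^ 2 *
        conv (convIter f k) (highPart (N / (k + 1)) f) ℓ ^ 2 := by
  set c := conv (convIter f k) (highPart (N / (k + 1)) f) ℓ
  have hrhs : 0 ≤ ((k + 2) * N) ^ (2 * s₀) * (k + 1) ^ 2 * c ^ 2 := by positivity
  unfold highSummand
  split_ifs with hℓ
  · rcases le_or_gt (jap ℓ) ((k + 2) * N) with hℓN | hℓN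
    · have hkey := convIter_succ_le_mul_conv_highPart hf0 hf (N / (k + 1)) k (ℓ := ℓ)
        (by rwa [mul_div_cancel₀ _ (by positivity : (k + 1 : ℝ) ≠ 0)])
      have := convIter_nonneg hf0 (k + 1) ℓ
      have := (jap_pos ℓ).le
      calc jap ℓ ^ (2 * s₀) * convIter f (k + 1) ℓ ^ 2
          ≤ ((k + 2) * N) ^ (2 * s₀) * ((k + 1) * c) ^ 2 := by gcongr
        _ = _ := by ring
    · rw [supportedIn_convIter hf (k + 1) ℓ (by push_cast at hℓN ⊢; nlinarith)]
      simpa using hrhs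
  · exact hrhs

lemma high_output_convIter_le (hN : 1 ≤ N) (hs₀ : 0 ≤ s₀) (hs : 0 ≤ s) (hf0 : ∀ a, 0 ≤ f a)
    (hf : SupportedIn f N) (hfs : Summable fun a => jap a ^ (2 * s) * f a ^ 2) (k : ℕ) :
    Summable (highSummand s₀ N (convIter f (k + 1))) ∧
      √(∑' ℓ, highSummand s₀ N (convIter f (k + 1)) ℓ) ≤
        ((k + 2) * N) ^ s₀ * (k + 1) * (N / (k + 1)) ^ (-s) * (∑' a, f a) ^ k * wnormR s f := by
  set M := N / (k + 1)
  have hM : 0 < M := by have := one_pos.trans_le hN; positivity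
  set g := convIter f k
  set h := highPart M f
  set A := ((k + 2) * N) ^ (2 * s₀) * (k + 1) ^ 2
  have hpoint := highSummand_convIter_le (s₀ := s₀) hN hs₀ hf0 hf k
  have hconv : Summable fun ℓ => A * conv g h ℓ ^ 2 :=
    (supportedIn_conv (supportedIn_convIter hf k) (supportedIn_highPart hf)).sq.summable.mul_left A
  have hF := Summable.of_nonneg_of_le (highSummand_nonneg s₀ N _) hpoint hconv
  have hW : 0 ≤ wnormR s f := Real.sqrt_nonneg _
  have hsumf : 0 ≤ ∑' a, f a := tsum_nonneg hf0
  refine ⟨hF, Real.sqrt_le_left (by positivity) |>.mpr ?_⟩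
  calc ∑' ℓ, highSummand s₀ N (convIter f (k + 1)) ℓ
      ≤ ∑' ℓ, A * conv g h ℓ ^ 2 := Summable.tsum_le_tsum hpoint hF hconv
    _ ≤ A * ((∑' a, g a) ^ 2 * ∑' a, h a ^ 2) := by
        rw [tsum_mul_left]
        gcongr
        exact (supportedIn_convIter hf k).tsum_sq_conv_le (convIter_nonneg hf0 k)
          (supportedIn_highPart hf)
    _ ≤ A * (((∑' a, f a) ^ k) ^ 2 * (M ^ (-(2 * s)) * wnormR s f ^ 2)) := by
        rw [tsum_convIter hf k]
        gcongr
        exact tsum_sq_highPart_le hM hs hfs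
    _ = _ := by
        simp only [mul_pow, rpow_sq_eq_rpow_two_mul (by positivity : (0 : ℝ) ≤ (k + 2) * N),
          rpow_sq_eq_rpow_two_mul hM.le, A]
        ring_nf

end HighOutput

theorem high_output_of_low_convolution_estimate_general
    (d : ℕ) (s s₀ : ℝ) (hs₀ : (d : ℝ) / 2 < s₀) (hss₀ : s₀ ≤ s) :
    ∃ C : ℝ, 1 ≤ C ∧
      ∀ m : ℕ, 3 ≤ m →
        ∀ N : ℝ, 1 ≤ N →
          ∀ f : (Fin d → ℤ) → ℝ,
            (∀ a, 0 ≤ f a) → (∀ a, N < jap a → f a = 0) →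
            Summable (fun a => jap a ^ (2 * s) * (f a) ^ 2) →
            Summable (fun ℓ : Fin d → ℤ =>
              if N < jap ℓ then jap ℓ ^ (2 * s₀) * (convIter f (m - 1) ℓ) ^ 2 else 0) ∧
            Real.sqrt (∑' ℓ : Fin d → ℤ,
                if N < jap ℓ then jap ℓ ^ (2 * s₀) * (convIter f (m - 1) ℓ) ^ 2 else 0)
              ≤ C ^ m * N ^ (s₀ - s) * wnormR s f ^ (m - 1) := by
  have hs₀pos : 0 < s₀ := lt_of_le_of_lt (by positivity) hs₀
  have hsum := summable_jap_rpow_neg hs₀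
  set K := √(∑' a : Fin d → ℤ, jap a ^ (-(2 * s₀)))
  have hK : 1 ≤ K := Real.one_le_sqrt.mpr <| by
    simpa using hsum.le_tsum 0 fun a _ => Real.rpow_nonneg (jap_pos a).le _
  refine ⟨2 ^ (s₀ + 1 + s) * K, one_le_mul_of_one_le_of_one_le
    (Real.one_le_rpow one_le_two (by linarith)) hK, fun m hm N hN f hf0 hf hfs => ?_⟩
  obtain ⟨k, rfl⟩ : ∃ k, m = k + 2 := ⟨m - 2, by omega⟩
  obtain ⟨hF, hbound⟩ := high_output_convIter_le hN hs₀pos.le (hs₀pos.le.trans hss₀) hf0 hf hfs k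
  refine ⟨hF, hbound.trans ?_⟩
  have hW : 0 ≤ wnormR s f := Real.sqrt_nonneg _
  calc ((k + 2) * N) ^ s₀ * (k + 1) * (N / (k + 1)) ^ (-s) * (∑' a, f a) ^ k * wnormR s f
      ≤ (2 ^ (s₀ + 1 + s)) ^ (k + 2) * N ^ (s₀ - s) * (K * wnormR s f) ^ k * wnormR s f :=
        mul_le_mul_of_nonneg_right (mul_le_mul
          (high_frequency_factor_le k (one_pos.trans_le hN) hs₀pos.le (hs₀pos.le.trans hss₀))
          (pow_le_pow_left₀ (tsum_nonneg hf0) (tsum_le_sqrt_mul_wnormR hf hss₀ hsum hfs) k)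
          (pow_nonneg (tsum_nonneg hf0) k) (by positivity)) hW
    _ = (2 ^ (s₀ + 1 + s)) ^ (k + 2) * K ^ k * N ^ (s₀ - s) * wnormR s f ^ (k + 1) := by ring
    _ ≤ (2 ^ (s₀ + 1 + s)) ^ (k + 2) * K ^ (k + 2) * N ^ (s₀ - s) * wnormR s f ^ (k + 1) := by
        gcongr
        omega
    _ = (2 ^ (s₀ + 1 + s) * K) ^ (k + 2) * N ^ (s₀ - s) * wnormR s f ^ (k + 2 - 1) := by
        rw [mul_pow]; rfl

theorem high_output_of_low_convolution_estimate
    (d : ℕ) (hd : 1 ≤ d) (s s₀ : ℝ) (hs₀ : (d : ℝ) / 2 < s₀) (hss₀ : s₀ ≤ s) :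
    ∃ C : ℝ, 1 ≤ C ∧
      ∀ m : ℕ, 3 ≤ m →
        ∀ N : ℝ, 1 ≤ N →
          ∀ f : (Fin d → ℤ) → ℝ,
            (∀ a, 0 ≤ f a) → (∀ a, N < jap a → f a = 0) →
            Summable (fun a => jap a ^ (2 * s) * (f a) ^ 2) →
            Summable (fun ℓ : Fin d → ℤ =>
              if N < jap ℓ then jap ℓ ^ (2 * s₀) * (convIter f (m - 1) ℓ) ^ 2 else 0) ∧
            Real.sqrt (∑' ℓ : Fin d → ℤ,
                if N < jap ℓ then jap ℓ ^ (2 * s₀) * (convIter f (m - 1) ℓ) ^ 2 else 0)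
              ≤ C ^ m * N ^ (s₀ - s) * wnormR s f ^ (m - 1) :=
  high_output_of_low_convolution_estimate_general d s s₀ hs₀ hss₀
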